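/- arXiv:1806.06141 — 2 statements merged into one kernel-verified Lean document; each statement's English description precedes it below -/
import Mathlib

section
/- Let A and B be self-adjoint bounded operators on a complex Hilbert space H, and suppose there exist orthogonal projections p, q on H such that AB = pq|AB| is the polar decomposition of AB (i.e. pq is a partial isometry and (pq)^*(pq) equals the orthogonal projection onto the closure of the range of (AB)^*). Then AB = BA. -/
/-!
For projections `p, q` with `U = pq` a partial isometry, `U = U^*U`: the C*-identity applied to
`U - U^*U` shows this. Hence `AB = U^*U |AB|`, and `U^*U` projects onto
`(ker AB)ᗮ = (ker |AB|)ᗮ ⊇ range |AB|`, so `AB = |AB|` is self-adjoint; a product of two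
self-adjoint operators is self-adjoint exactly when they commute.
-/

open ContinuousLinearMap

variable {H : Type*} [NormedAddCommGroup H] [InnerProductSpace ℂ H] [CompleteSpace H]

/-- The absolute value `|T| = (T^*T)^(1/2)` of a bounded operator on a complex
Hilbert space, defined via the continuous functional calculus. -/
noncomputable def absOp (T : H →L[ℂ] H) : H →L[ℂ] H :=
  cfc Real.sqrt (adjoint T * T)

/-- The orthogonal projection of `H` onto the closure of the range of `T`,
regarded as an operator on `H`. -/
noncomputable def rangeProjOp (T : H →L[ℂ] H) : H →L[ℂ] H :=
  (LinearMap.range (T : H →ₗ[ℂ] H)).topologicalClosure.subtypeL ∘L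
    Submodule.orthogonalProjectionOnto (LinearMap.range (T : H →ₗ[ℂ] H)).topologicalClosure

/-- `U` is a partial isometry: `U^*U` is an orthogonal projection
(a self-adjoint idempotent). -/
def IsPartialIsometryOp (U : H →L[ℂ] H) : Prop :=
  IsSelfAdjoint (adjoint U * U) ∧ (adjoint U * U) * (adjoint U * U) = adjoint U * U

/-- `T = U|T|` is the polar decomposition of `T`: `U` is a partial isometry and
`U^*U` is the orthogonal projection onto the closure of the range of `T^*`. -/
def IsPolarDecompositionOp (T U : H →L[ℂ] H) : Prop :=
  T = U * absOp T ∧ IsPartialIsometryOp U ∧ adjoint U * U = rangeProjOp (adjoint T)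

theorem IsStarProjection.mul_eq_star_mul_self_of_isIdempotentElem {R : Type*}
    [NonUnitalNormedRing R] [StarRing R] [CStarRing R] {p q : R}
    (hp : IsStarProjection p) (hq : IsStarProjection q)
    (he : IsIdempotentElem (star (p * q) * (p * q))) :
    p * q = star (p * q) * (p * q) := by
  set e := star (p * q) * (p * q)
  have he_star : star e = e := (IsSelfAdjoint.star_mul_self (p * q)).star_eq
  -- `e = qpq`, so `e * (pq) = qpqpq = e * e`.
  have he_mul : e * (p * q) = e := by
    calc e * (p * q) = e * e := by
          simp only [e, star_mul, hp.isSelfAdjoint.star_eq, hq.isSelfAdjoint.star_eq, mul_assoc,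
            ← mul_assoc p p, ← mul_assoc q q, hp.isIdempotentElem.eq, hq.isIdempotentElem.eq]
      _ = e := he.eq
  have hstar_mul : star (p * q) * e = e := by
    simpa only [star_mul, he_star] using congrArg star he_mul
  have : star (p * q - e) * (p * q - e) = 0 := by
    rw [star_sub, he_star, sub_mul, mul_sub, mul_sub, hstar_mul, he_mul, he.eq]
    abel
  exact sub_eq_zero.mp (CStarRing.star_mul_self_eq_zero_iff _ |>.mp this)

theorem adjoint_mul_self_nonneg (T : H →L[ℂ] H) : 0 ≤ adjoint T * T :=
  star_eq_adjoint T ▸ star_mul_self_nonneg T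

theorem absOp_eq_sqrt (T : H →L[ℂ] H) : absOp T = CFC.sqrt (adjoint T * T) := by
  rw [CFC.sqrt_eq_real_sqrt _ (adjoint_mul_self_nonneg T), cfcₙ_eq_cfc]
  rfl

theorem absOp_isSelfAdjoint (T : H →L[ℂ] H) : IsSelfAdjoint (absOp T) :=
  absOp_eq_sqrt T ▸ (CFC.sqrt_nonneg _).isSelfAdjoint

theorem absOp_mul_absOp (T : H →L[ℂ] H) : absOp T * absOp T = adjoint T * T := by
  rw [absOp_eq_sqrt]
  exact CFC.sqrt_mul_sqrt_self _ (adjoint_mul_self_nonneg T)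

theorem ker_absOp (T : H →L[ℂ] H) : (absOp T).ker = T.ker := by
  rw [← ker_adjoint_comp_self (absOp T), (absOp_isSelfAdjoint T).adjoint_eq,
    ← ker_adjoint_comp_self T, ← mul_def, ← mul_def, absOp_mul_absOp]

theorem rangeProjOp_eq_starProjection (T : H →L[ℂ] H) :
    rangeProjOp T = (LinearMap.range (T : H →ₗ[ℂ] H)).topologicalClosure.starProjection :=
  rfl

theorem rangeProjOp_adjoint_mul_of_ker_le {T S : H →L[ℂ] H} (hS : IsSelfAdjoint S)
    (h : T.ker ≤ S.ker) : rangeProjOp (adjoint T) * S = S := by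
  ext x
  change rangeProjOp (adjoint T) (S x) = S x
  rw [rangeProjOp_eq_starProjection, Submodule.starProjection_eq_self_iff,
    ← orthogonal_ker]
  refine Submodule.orthogonal_le h ?_
  rw [orthogonal_ker, hS.adjoint_eq]
  exact Submodule.le_topologicalClosure _ ⟨x, rfl⟩

/-- If `A, B` are self-adjoint and `AB = pq|AB|` is the polar decomposition of
`AB` for some orthogonal projections `p, q`, then `AB = BA`. -/
theorem commute_of_polarDecomposition_proj_mul (A B p q : H →L[ℂ] H)
    (hA : IsSelfAdjoint A) (hB : IsSelfAdjoint B)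
    (hp : IsSelfAdjoint p ∧ p * p = p) (hq : IsSelfAdjoint q ∧ q * q = q)
    (h1 : A * B = (p * q) * absOp (A * B))
    (h2 : IsPartialIsometryOp (p * q))
    (h3 : adjoint (p * q) * (p * q) = rangeProjOp (adjoint (A * B))) :
    A * B = B * A := by
  have hpq : p * q = adjoint (p * q) * (p * q) := by
    simpa only [star_eq_adjoint] using
      IsStarProjection.mul_eq_star_mul_self_of_isIdempotentElem ⟨hp.2, hp.1⟩ ⟨hq.2, hq.1⟩ h2.2
  have habs : A * B = absOp (A * B) :=
    calc A * B = (p * q) * absOp (A * B) := h1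
      _ = rangeProjOp (adjoint (A * B)) * absOp (A * B) := by rw [hpq, h3]
      _ = absOp (A * B) :=
        rangeProjOp_adjoint_mul_of_ker_le (absOp_isSelfAdjoint _) (ker_absOp _).ge
  exact ((hA.commute_iff hB).mpr (habs ▸ absOp_isSelfAdjoint _)).eq
end

section
/- Let T be a bounded operator on a complex Hilbert space H with polar decomposition T = U|T| which is binormal, i.e. T^*T commutes with TT^*. Then for all real α > 0 and β > 0: U|T|^α U^* commutes with |T|^β, and U^*|T|^α U commutes with |T|^β. -/
/-! Write `A = T*T` and `B = TT* = U A U*`. Since `A U*U = A`, conjugation `x ↦ U x U*` is a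
*-homomorphism on the corner of `U*U`, which contains `A`; hence `U f(A) U* = f(B)` for continuous
`f` with `f 0 = 0`. For `f x = √x ^ α` this gives `U|T|^α U* = f(B)`, which commutes with `A` by
binormality, hence with every `|T|^β`. For the second operator, `B U = U A` and `U* B = A U*` turn
the commutation of `|T|^α` with `B` into the commutation of `U*|T|^α U` with `A`. -/

open ContinuousLinearMap

variable {H : Type*} [NormedAddCommGroup H] [InnerProductSpace ℂ H] [CompleteSpace H]

/-- For a positive operator `T` and real `α`, the power `T^α` defined by the
continuous functional calculus. -/
noncomputable def powOp (T : H →L[ℂ] H) (α : ℝ) : H →L[ℂ] H :=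
  cfc (fun x : ℝ => x ^ α) T

namespace NonUnitalStarSubalgebra

variable {A : Type*} [NonUnitalCStarAlgebra A]

def corner (p : A) (hp : IsSelfAdjoint p) : NonUnitalStarSubalgebra ℂ A where
  carrier := {x | p * x = x ∧ x * p = x}
  zero_mem' := by simp
  add_mem' := fun ⟨h₁, h₂⟩ ⟨h₃, h₄⟩ => by simp_all [mul_add, add_mul]
  mul_mem' := fun {x y} ⟨h₁, _⟩ ⟨_, h₄⟩ => ⟨by rw [← mul_assoc, h₁], by rw [mul_assoc, h₄]⟩
  smul_mem' := fun c x ⟨h₁, h₂⟩ => ⟨by rw [mul_smul_comm, h₁], by rw [smul_mul_assoc, h₂]⟩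
  star_mem' := fun {x} ⟨h₁, h₂⟩ =>
    ⟨by rw [← hp.star_eq, ← star_mul, h₂], by rw [← hp.star_eq, ← star_mul, h₁]⟩

instance isClosed_corner (p : A) (hp : IsSelfAdjoint p) : IsClosed (corner p hp : Set A) :=
  (isClosed_eq (by fun_prop) (by fun_prop)).inter (isClosed_eq (by fun_prop) (by fun_prop))

def cornerConj (u : A) : corner (star u * u) (.star_mul_self u) →⋆ₙₐ[ℂ] A where
  toFun x := u * x * star u
  map_zero' := by simp
  map_add' x y := by simp [mul_add, add_mul]
  map_smul' c x := by simp [mul_smul_comm, smul_mul_assoc]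
  map_mul' x y := by
    simp only [NonUnitalStarSubalgebra.coe_mul]
    conv_lhs => rw [← x.2.2]
    simp only [mul_assoc]
  map_star' x := by simp [mul_assoc]

theorem continuous_cornerConj (u : A) : Continuous (cornerConj u) := by
  change Continuous fun x : corner (star u * u) _ => u * (x : A) * star u
  fun_prop

end NonUnitalStarSubalgebra

open NonUnitalStarSubalgebra in
theorem cfcₙ_mul_mul_star {A : Type*} [NonUnitalCStarAlgebra A] {u a : A} (ha : IsSelfAdjoint a)
    (hau : a * (star u * u) = a) (f : ℝ → ℝ) (hf : Continuous f) (hf0 : f 0 = 0) :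
    cfcₙ f (u * a * star u) = u * cfcₙ f a * star u := by
  have hua : star u * u * a = a := by
    simpa [ha.star_eq, mul_assoc] using congrArg star hau
  let a' : corner (star u * u) (.star_mul_self u) := ⟨a, hua, hau⟩
  have ha' : IsSelfAdjoint a' := Subtype.ext ha
  have h_conj := (cornerConj u).map_cfcₙ f a' (hφ := continuous_cornerConj u)
  have h_incl := (NonUnitalStarSubalgebraClass.subtype (corner (star u * u) _)).map_cfcₙ f a'
  exact h_conj.symm.trans (congrArg (u * · * star u) h_incl)

theorem Commute.star_mul_mul_of_mul_mul_star {R : Type*} [Semigroup R] [StarMul R]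
    {u a c : R} (ha : IsSelfAdjoint a) (hau : a * (star u * u) = a)
    (hc : Commute c (u * a * star u)) : Commute (star u * c * u) a := by
  have hua : star u * u * a = a := by
    simpa [ha.star_eq, mul_assoc] using congrArg star hau
  calc star u * c * u * a = star u * (c * (u * a * star u)) * u := by
        simp only [mul_assoc, hau]
    _ = star u * (u * a * star u) * c * u := by rw [hc.eq]; simp only [mul_assoc]
    _ = a * (star u * c * u) := by
        rw [← mul_assoc (star u), ← mul_assoc (star u), hua]; simp only [mul_assoc]

theorem rangeProjOp_mul_self (T : H →L[ℂ] H) : rangeProjOp T * T = T := by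
  ext x
  exact Submodule.starProjection_eq_self_iff.mpr
    (Submodule.le_topologicalClosure _ (LinearMap.mem_range_self _ x))

theorem absOp_eq_cfcAbs (T : H →L[ℂ] H) : absOp T = CFC.abs T := by
  rw [absOp, CFC.abs, CFC.sqrt_eq_real_sqrt _ (star_mul_self_nonneg T), cfcₙ_eq_cfc,
    star_eq_adjoint]

theorem powOp_absOp (T : H →L[ℂ] H) {γ : ℝ} (hγ : 0 < γ) :
    powOp (absOp T) γ = cfcₙ (fun x => √x ^ γ) (adjoint T * T) := by
  have hA : IsSelfAdjoint (adjoint T * T) := IsSelfAdjoint.star_mul_self T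
  have hpow : Continuous fun x : ℝ => x ^ γ := Real.continuous_rpow_const hγ.le
  rw [powOp, absOp, ← cfc_comp' (fun x : ℝ => x ^ γ) Real.sqrt _ hpow.continuousOn,
    cfcₙ_eq_cfc (hf0 := by simp [hγ.ne'])]

namespace IsPolarDecompositionOp

variable {T U : H →L[ℂ] H}

theorem adjoint_mul_self_mul_adjoint_mul_self (hT : IsPolarDecompositionOp T U) :
    adjoint T * T * (adjoint U * U) = adjoint T * T := by
  have h : adjoint U * U * adjoint T = adjoint T := hT.2.2 ▸ rangeProjOp_mul_self _
  have h' : T * (adjoint U * U) = T := by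
    simpa [← star_eq_adjoint, mul_assoc] using congrArg star h
  rw [mul_assoc, h']

theorem mul_adjoint_eq (hT : IsPolarDecompositionOp T U) :
    T * adjoint T = U * (adjoint T * T) * adjoint U := by
  have hR : IsSelfAdjoint (absOp T) := by
    rw [absOp_eq_cfcAbs]; exact (CFC.abs_nonneg T).isSelfAdjoint
  have hRR : absOp T * absOp T = adjoint T * T := by
    rw [absOp_eq_cfcAbs]; exact CFC.abs_mul_abs T
  calc T * adjoint T = U * absOp T * adjoint (U * absOp T) := by rw [← hT.1]
    _ = U * (absOp T * absOp T) * adjoint U := by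
      simp only [← star_eq_adjoint, star_mul, hR.star_eq, mul_assoc]
    _ = U * (adjoint T * T) * adjoint U := by rw [hRR]

end IsPolarDecompositionOp

theorem commute_of_binormal_general (T U : H →L[ℂ] H)
    (hT : IsPolarDecompositionOp T U)
    (hbin : Commute (adjoint T * T) (T * adjoint T))
    (α β : ℝ) (hα : 0 < α) :
    Commute (U * powOp (absOp T) α * adjoint U) (powOp (absOp T) β) ∧
    Commute (adjoint U * powOp (absOp T) α * U) (powOp (absOp T) β) := by
  have hA : IsSelfAdjoint (adjoint T * T) := IsSelfAdjoint.star_mul_self T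
  have hAP := hT.adjoint_mul_self_mul_adjoint_mul_self
  have commute_powOp : ∀ {c} (γ : ℝ), Commute c (adjoint T * T) → Commute c (powOp (absOp T) γ) :=
    fun γ h => ((h.symm.cfc_real Real.sqrt).cfc_real fun x : ℝ => x ^ γ).symm
  rw [hT.mul_adjoint_eq] at hbin
  constructor
  · have hf : Continuous fun x : ℝ => √x ^ α :=
      (Real.continuous_rpow_const hα.le).comp Real.continuous_sqrt
    refine commute_powOp β ?_
    rw [powOp_absOp T hα, ← star_eq_adjoint U,
      ← cfcₙ_mul_mul_star hA hAP _ hf (by simp [hα.ne'])]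
    exact hbin.symm.cfcₙ_real _
  · exact commute_powOp β
      (Commute.star_mul_mul_of_mul_mul_star hA hAP (commute_powOp α hbin.symm).symm)

/-- If `T = U|T|` is binormal, then `U|T|^α U^*` and `U^*|T|^α U` commute
with `|T|^β` for all `α, β > 0`. -/
theorem commute_of_binormal (T U : H →L[ℂ] H)
    (hT : IsPolarDecompositionOp T U)
    (hbin : Commute (adjoint T * T) (T * adjoint T))
    (α β : ℝ) (hα : 0 < α) (hβ : 0 < β) :
    Commute (U * powOp (absOp T) α * adjoint U) (powOp (absOp T) β) ∧
    Commute (adjoint U * powOp (absOp T) α * U) (powOp (absOp T) β) :=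
  commute_of_binormal_general T U hT hbin α β hα
end
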